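/- Let G be a combinatorial Gauss diagram. If G can be transformed into a parallel Gauss diagram by a finite sequence of m moves, each of which is either an arc-shift move or a sign-flip move, then 2m ≥ |J(G)|. In particular, the minimum number of such moves needed to transform G into a parallel Gauss diagram is at least |J(G)|/2 (the Gauss-diagram form of the bound A(K) ≥ |J(K)|/2 on the arc shift number). -/

import Mathlib

open scoped Classical

/-- The cyclically next position on a circle of `m` marked points. -/
def nextPos {m : ℕ} (p : Fin m) : Fin m :=
  ⟨(p.val + 1) % m, Nat.mod_lt _ p.pos⟩

/-- `Inside a b x` : the point `x` lies strictly inside the cyclic interval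
running from `a` (forward) to `b`. -/
def Inside {m : ℕ} (a b x : Fin m) : Prop :=
  0 < (x - a).val ∧ (x - a).val < (b - a).val

/-- A combinatorial Gauss diagram with `n` chords: a bijection assigning to each
chord its two endpoints among `2 * n` cyclically ordered points, together with a
sign function taking values in `{-1, 1}`. -/
structure GaussDiagram (n : ℕ) where
  endpoint : Fin n × Bool ≃ Fin (2 * n)
  sign : Fin n → ℤ
  sign_pm : ∀ c, sign c = 1 ∨ sign c = -1

/-- Two chords are interlinked if exactly one endpoint of `d` lies strictly inside
the cyclic interval from `endpoint (c, false)` to `endpoint (c, true)`. -/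
def Interlinked {n : ℕ} (G : GaussDiagram n) (c d : Fin n) : Prop :=
  Xor'
    (Inside (G.endpoint (c, false)) (G.endpoint (c, true)) (G.endpoint (d, false)))
    (Inside (G.endpoint (c, false)) (G.endpoint (c, true)) (G.endpoint (d, true)))

/-- A chord is odd if it is interlinked with an odd number of other chords. -/
def OddChord {n : ℕ} (G : GaussDiagram n) (c : Fin n) : Prop :=
  Odd ((Finset.univ.filter fun d => d ≠ c ∧ Interlinked G c d).card)

/-- The odd writhe: the sum of the signs of the odd chords. -/
noncomputable def oddWrithe {n : ℕ} (G : GaussDiagram n) : ℤ :=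
  ∑ c ∈ Finset.univ.filter (fun c => OddChord G c), G.sign c

/-- `AdjSwap G G' p c d` : `G'` is obtained from `G` by the adjacent endpoint swap at
the cyclically adjacent positions `p`, `p+1`, which are occupied by endpoints of the
two distinct chords `c` and `d`; all signs are unchanged. -/
def AdjSwap {n : ℕ} (G G' : GaussDiagram n) (p : Fin (2 * n)) (c d : Fin n) : Prop :=
  c ≠ d ∧ (G.endpoint.symm p).1 = c ∧ (G.endpoint.symm (nextPos p)).1 = d ∧
    G'.endpoint = G.endpoint.trans (Equiv.swap p (nextPos p)) ∧
    G'.sign = G.sign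

/-- `ArcShift G G' p c d` : `G'` is obtained from `G` by the arc-shift move at the
cyclically adjacent positions `p`, `p+1`, occupied by endpoints of the two distinct
chords `c` and `d`: the two endpoints are exchanged and the signs of `c` and `d`
are negated. -/
def ArcShift {n : ℕ} (G G' : GaussDiagram n) (p : Fin (2 * n)) (c d : Fin n) : Prop :=
  c ≠ d ∧ (G.endpoint.symm p).1 = c ∧ (G.endpoint.symm (nextPos p)).1 = d ∧
    G'.endpoint = G.endpoint.trans (Equiv.swap p (nextPos p)) ∧
    G'.sign = fun e => if e = c ∨ e = d then -G.sign e else G.sign e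

/-- `SignFlip G G' c` : `G'` is obtained from `G` by negating the sign of the chord `c`,
changing nothing else. -/
def SignFlip {n : ℕ} (G G' : GaussDiagram n) (c : Fin n) : Prop :=
  G'.endpoint = G.endpoint ∧ G'.sign = Function.update G.sign c (-G.sign c)

/-- An arc-shift move between Gauss diagrams (at some position, on some pair of chords). -/
def ArcShiftMove {n : ℕ} (G G' : GaussDiagram n) : Prop :=
  ∃ p c d, ArcShift G G' p c d

/-- A sign-flip move between Gauss diagrams (at some chord). -/
def SignFlipMove {n : ℕ} (G G' : GaussDiagram n) : Prop :=
  ∃ c, SignFlip G G' c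

/-- A move is either an arc-shift move or a sign-flip move. -/
def Move {n : ℕ} (G G' : GaussDiagram n) : Prop :=
  ArcShiftMove G G' ∨ SignFlipMove G G'

/-- A Gauss diagram is parallel if no two of its chords are interlinked. -/
def Parallel {n : ℕ} (G : GaussDiagram n) : Prop :=
  ∀ c d : Fin n, c ≠ d → ¬ Interlinked G c d

/-!
A chord is odd exactly when the arc from its first to its second endpoint has even length: the
number of chords interlinked with it has the parity of the number of endpoints strictly inside
that arc, and every position strictly inside the arc carries an endpoint. Exchanging two
adjacent endpoints of distinct chords `c`, `d` moves one endpoint of each by one step and fixes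
all other endpoints; since the circle has an even number `2 n` of positions, this toggles the
parity of `c` and `d` and of no other chord. Hence an arc-shift move changes the odd writhe by
at most `1 + 1`, a sign flip changes it by at most `2`, and a parallel diagram has odd writhe `0`.
-/

open Finset Equiv

lemma Fin.val_sub_eq_ite {m : ℕ} (a b : Fin m) :
    (b - a).val = if a ≤ b then b.val - a.val else m + b.val - a.val := by
  split_ifs with h
  · exact Fin.coe_sub_iff_le.2 h
  · exact Fin.coe_sub_iff_lt.2 (not_le.1 h)

lemma val_nextPos {m : ℕ} (p : Fin m) :
    (nextPos p).val = if p.val + 1 = m then 0 else p.val + 1 := by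
  split_ifs with h
  · simp [nextPos, h]
  · exact Nat.mod_eq_of_lt (by omega)

lemma even_val_sub_nextPos_iff {m : ℕ} (hm : Even m) (a b : Fin m) :
    Even (b - nextPos a).val ↔ ¬ Even (b - a).val := by
  have := val_nextPos a
  have := a.isLt
  have := b.isLt
  rw [Nat.even_iff] at hm
  simp only [Fin.val_sub_eq_ite, Nat.even_iff, Fin.le_def]
  split_ifs at * <;> omega

lemma even_val_nextPos_sub_iff {m : ℕ} (hm : Even m) (a b : Fin m) :
    Even (nextPos b - a).val ↔ ¬ Even (b - a).val := by
  have := val_nextPos b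
  have := a.isLt
  have := b.isLt
  rw [Nat.even_iff] at hm
  simp only [Fin.val_sub_eq_ite, Nat.even_iff, Fin.le_def]
  split_ifs at * <;> omega

lemma not_inside_left {m : ℕ} (a b : Fin m) : ¬ Inside a b a := by
  simp [Inside, Fin.val_sub_eq_ite]

lemma not_inside_right {m : ℕ} (a b : Fin m) : ¬ Inside a b b := by
  simp [Inside]

lemma card_filter_inside {m : ℕ} (a b : Fin m) :
    #{y | Inside a b y} = (b - a).val - 1 := by
  have : NeZero m := ⟨a.pos.ne'⟩
  rw [card_equiv (Equiv.subRight a) (t := Ioo 0 (b - a)), Fin.card_Ioo, Fin.val_zero, Nat.sub_zero]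
  intro y
  rw [mem_filter_univ]
  simp only [Inside, mem_Ioo, Fin.lt_def, Equiv.subRight_apply, Fin.val_zero]

lemma ite_xor_eq_add (P Q : Prop) [Decidable P] [Decidable Q] :
    (if Xor P Q then 1 else 0 : ZMod 2) = (if P then 1 else 0) + if Q then 1 else 0 := by
  by_cases P <;> by_cases Q <;> simp_all [Xor]
  decide

namespace GaussDiagram

variable {n : ℕ}

def arcLength (G : GaussDiagram n) (c : Fin n) : ℕ :=
  (G.endpoint (c, true) - G.endpoint (c, false)).val

lemma natCast_card_interlinked (G : GaussDiagram n) (c : Fin n) :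
    (#{f | Interlinked G c f} : ZMod 2) =
      #{y | Inside (G.endpoint (c, false)) (G.endpoint (c, true)) y} := by
  rw [natCast_card_filter, natCast_card_filter, ← Equiv.sum_comp G.endpoint,
    Fintype.sum_prod_type]
  simp only [Fintype.sum_bool, add_comm]
  exact sum_congr rfl fun f _ => by convert ite_xor_eq_add _ _ using 2; rfl

lemma arcLength_ne_zero (G : GaussDiagram n) (c : Fin n) : G.arcLength c ≠ 0 := by
  have hne : G.endpoint (c, false) ≠ G.endpoint (c, true) := by simp
  have := (G.endpoint (c, false)).isLt
  have := (G.endpoint (c, true)).isLt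
  rw [arcLength, Fin.val_sub_eq_ite]
  rw [Ne, Fin.ext_iff] at hne
  split_ifs with h <;> rw [Fin.le_def] at * <;> omega

lemma not_interlinked_self (G : GaussDiagram n) (c : Fin n) : ¬ Interlinked G c c := by
  rintro (⟨h, -⟩ | ⟨h, -⟩)
  · exact not_inside_left _ _ h
  · exact not_inside_right _ _ h

theorem oddChord_iff_even_arcLength (G : GaussDiagram n) (c : Fin n) :
    OddChord G c ↔ Even (G.arcLength c) := by
  have hfilter : univ.filter (fun f => f ≠ c ∧ Interlinked G c f) = univ.filter (Interlinked G c) :=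
    filter_congr fun f _ => and_iff_right_of_imp fun h => by
      rintro rfl
      exact G.not_interlinked_self f h
  obtain ⟨k, hk⟩ := Nat.exists_eq_add_one_of_ne_zero (G.arcLength_ne_zero c)
  rw [OddChord, hfilter, ← ZMod.natCast_eq_one_iff_odd, natCast_card_interlinked,
    card_filter_inside, ← arcLength, hk, Nat.add_one_sub_one, ZMod.natCast_eq_one_iff_odd,
    Nat.even_add_one, Nat.not_even_iff_odd]

lemma even_arcLength_iff_of_step {G G' : GaussDiagram n} {e : Fin n} {β : Bool}
    (hstep : G'.endpoint (e, β) = nextPos (G.endpoint (e, β)) ∨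
      G.endpoint (e, β) = nextPos (G'.endpoint (e, β)))
    (hfix : G'.endpoint (e, !β) = G.endpoint (e, !β)) :
    Even (G'.arcLength e) ↔ ¬ Even (G.arcLength e) := by
  have hm : Even (2 * n) := even_two_mul n
  cases β <;> rcases hstep with h | h <;> simp only [Bool.not_false, Bool.not_true] at hfix <;>
    simp only [arcLength, h, hfix, even_val_sub_nextPos_iff hm, even_val_nextPos_sub_iff hm,
      not_not]

noncomputable def oddWritheTerm (G : GaussDiagram n) (c : Fin n) : ℤ :=
  if OddChord G c then G.sign c else 0

lemma oddWrithe_eq_sum (G : GaussDiagram n) : oddWrithe G = ∑ c, G.oddWritheTerm c := by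
  rw [oddWrithe, sum_filter]
  rfl

lemma abs_oddWritheTerm_le_one (G : GaussDiagram n) (c : Fin n) : |G.oddWritheTerm c| ≤ 1 := by
  unfold oddWritheTerm
  split_ifs
  · rcases G.sign_pm c with h | h <;> simp [h]
  · simp

lemma abs_oddWritheTerm_sub_le_one {G G' : GaussDiagram n} {c : Fin n}
    (h : OddChord G' c ↔ ¬ OddChord G c) : |G.oddWritheTerm c - G'.oddWritheTerm c| ≤ 1 := by
  by_cases hc : OddChord G c
  · simpa [oddWritheTerm, hc, h] using G.abs_oddWritheTerm_le_one c
  · simpa [oddWritheTerm, hc, h] using G'.abs_oddWritheTerm_le_one c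

lemma abs_oddWrithe_sub_le_sum {G G' : GaussDiagram n} (s : Finset (Fin n))
    (hs : ∀ e ∉ s, G.oddWritheTerm e = G'.oddWritheTerm e) :
    |oddWrithe G - oddWrithe G'| ≤ ∑ e ∈ s, |G.oddWritheTerm e - G'.oddWritheTerm e| := by
  rw [oddWrithe_eq_sum, oddWrithe_eq_sum, ← sum_sub_distrib,
    ← sum_subset (subset_univ s) fun e _ he => sub_eq_zero.2 (hs e he)]
  exact abs_sum_le_sum_abs _ _

end GaussDiagram

open GaussDiagram

section Moves

variable {n : ℕ}

theorem ArcShift.oddChord_iff {G G' : GaussDiagram n} {p : Fin (2 * n)} {c d : Fin n}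
    (h : ArcShift G G' p c d) (e : Fin n) :
    OddChord G' e ↔ Xor (e = c ∨ e = d) (OddChord G e) := by
  obtain ⟨hcd, hc, hd, hE, -⟩ := h
  obtain ⟨β, hβ⟩ : ∃ β, G.endpoint (c, β) = p :=
    ⟨_, by rw [← hc, Prod.mk.eta, apply_symm_apply]⟩
  obtain ⟨γ, hγ⟩ : ∃ γ, G.endpoint (d, γ) = nextPos p :=
    ⟨_, by rw [← hd, Prod.mk.eta, apply_symm_apply]⟩
  have hE' : ∀ z, G'.endpoint z = swap p (nextPos p) (G.endpoint z) := by simp [hE]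
  have hfix : ∀ z, z ≠ (c, β) → z ≠ (d, γ) → G'.endpoint z = G.endpoint z := fun z h₁ h₂ => by
    rw [hE', swap_apply_of_ne_of_ne (by rwa [← hβ, G.endpoint.injective.ne_iff])
      (by rwa [← hγ, G.endpoint.injective.ne_iff])]
  simp only [oddChord_iff_even_arcLength]
  by_cases hec : e = c
  · rw [hec]
    simp only [true_or, xor_true]
    refine even_arcLength_iff_of_step (β := β) (.inl ?_) (hfix (c, !β) (by simp) (by simp [hcd]))
    rw [hE', hβ, swap_apply_left]
  by_cases hed : e = d
  · rw [hed]
    simp only [or_true, xor_true]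
    refine even_arcLength_iff_of_step (β := γ) (.inr ?_)
      (hfix (d, !γ) (by simp [Ne.symm hcd]) (by simp))
    rw [hE', hγ, swap_apply_right]
  simp only [hec, hed, or_self, xor_false, id, arcLength]
  rw [hfix _ (by simp [hec]) (by simp [hed]), hfix _ (by simp [hec]) (by simp [hed])]

theorem ArcShift.abs_oddWrithe_sub_le {G G' : GaussDiagram n} {p : Fin (2 * n)} {c d : Fin n}
    (h : ArcShift G G' p c d) : |oddWrithe G - oddWrithe G'| ≤ 2 := by
  have hodd := h.oddChord_iff
  obtain ⟨hcd, -, -, -, hsign⟩ := h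
  have htoggle : ∀ e, e = c ∨ e = d → |G.oddWritheTerm e - G'.oddWritheTerm e| ≤ 1 :=
    fun e he => abs_oddWritheTerm_sub_le_one (by simpa [he] using hodd e)
  calc |oddWrithe G - oddWrithe G'|
      ≤ ∑ e ∈ {c, d}, |G.oddWritheTerm e - G'.oddWritheTerm e| := by
        refine abs_oddWrithe_sub_le_sum _ fun e he => ?_
        simp only [mem_insert, mem_singleton, not_or] at he
        simp [oddWritheTerm, hodd e, he, hsign]
    _ = |G.oddWritheTerm c - G'.oddWritheTerm c| + |G.oddWritheTerm d - G'.oddWritheTerm d| :=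
        sum_pair hcd
    _ ≤ 2 := by linarith [htoggle c (.inl rfl), htoggle d (.inr rfl)]

theorem SignFlip.abs_oddWrithe_sub_le {G G' : GaussDiagram n} {c : Fin n} (h : SignFlip G G' c) :
    |oddWrithe G - oddWrithe G'| ≤ 2 := by
  have hodd : ∀ e, OddChord G' e ↔ OddChord G e := by
    simp [oddChord_iff_even_arcLength, arcLength, h.1]
  calc |oddWrithe G - oddWrithe G'|
      ≤ ∑ e ∈ {c}, |G.oddWritheTerm e - G'.oddWritheTerm e| := by
        refine abs_oddWrithe_sub_le_sum _ fun e he => ?_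
        simp [oddWritheTerm, hodd, h.2, Function.update_of_ne (notMem_singleton.1 he)]
    _ ≤ |G.oddWritheTerm c| + |G'.oddWritheTerm c| := by
        rw [sum_singleton]
        exact abs_sub _ _
    _ ≤ 2 := by linarith [G.abs_oddWritheTerm_le_one c, G'.abs_oddWritheTerm_le_one c]

theorem Move.abs_oddWrithe_sub_le {G G' : GaussDiagram n} (h : Move G G') :
    |oddWrithe G - oddWrithe G'| ≤ 2 := by
  rcases h with ⟨p, c, d, h⟩ | ⟨c, h⟩
  exacts [h.abs_oddWrithe_sub_le, h.abs_oddWrithe_sub_le]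

theorem Parallel.oddWrithe_eq_zero {G : GaussDiagram n} (h : Parallel G) : oddWrithe G = 0 := by
  refine sum_eq_zero fun c hc => absurd (mem_filter.1 hc).2 ?_
  rw [OddChord, filter_false_of_mem fun d _ hd => h c d (Ne.symm hd.1) hd.2]
  exact Nat.not_odd_zero

end Moves

lemma abs_sub_le_mul_of_abs_sub_succ_le {u : ℕ → ℤ} {K : ℤ} {m : ℕ}
    (h : ∀ i < m, |u i - u (i + 1)| ≤ K) : |u 0 - u m| ≤ m * K := by
  induction m with
  | zero => simp
  | succ m ih =>
    have hm := h m m.lt_succ_self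
    have := ih fun i hi => h i (by omega)
    calc |u 0 - u (m + 1)| ≤ |u 0 - u m| + |u m - u (m + 1)| := abs_sub_le _ _ _
      _ ≤ (m + 1 : ℕ) * K := by push_cast; linarith

theorem oddWrithe_lowerbound_general {n : ℕ} (G : GaussDiagram n) (m : ℕ)
    (seq : ℕ → GaussDiagram n) (h0 : seq 0 = G)
    (hstep : ∀ i < m, Move (seq i) (seq (i + 1)))
    (hpar : Parallel (seq m)) :
    |oddWrithe G| ≤ 2 * (m : ℤ) := by
  have h := abs_sub_le_mul_of_abs_sub_succ_le (u := fun i => oddWrithe (seq i)) (K := 2)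
    fun i hi => (hstep i hi).abs_oddWrithe_sub_le
  simpa [h0, hpar.oddWrithe_eq_zero, mul_comm] using h

/-- if `G` can be transformed into a parallel Gauss diagram by a sequence of
`m` moves, each an arc-shift move or a sign-flip move, then `2 m ≥ |J(G)|`; in particular
the minimal number of such moves is at least `|J(G)| / 2`. -/
theorem oddWrithe_lowerbound {n : ℕ} (hn : 1 ≤ n) (G : GaussDiagram n) (m : ℕ)
    (seq : ℕ → GaussDiagram n) (h0 : seq 0 = G)
    (hstep : ∀ i < m, Move (seq i) (seq (i + 1)))
    (hpar : Parallel (seq m)) :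
    |oddWrithe G| ≤ 2 * (m : ℤ) :=
  oddWrithe_lowerbound_general G m seq h0 hstep hpar
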